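/- If the free product completion Fam_Π distributes over the free coproduct completion Fam_Σ (i.e., there is a pseudo-distributive law lifting Fam_Π), then left multiadjoints are stable under Fam_Π: if a functor L : A → B is a left multiadjoint, then Fam_Π(L) : Fam_Π(A) → Fam_Π(B) is a left multiadjoint. -/
import Mathlib


open CategoryTheory

universe v u u'

/-- The free coproduct completion `Fam_Σ A`: objects are small families of objects of `A`. -/
structure Fam (A : Type u) [Category.{v} A] where
  ι : Type v
  obj : ι → A

variable {A : Type u} [Category.{v} A] {B : Type u'} [Category.{v} B]

/-- Morphisms of families: a reindexing function together with componentwise morphisms. -/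
instance : Category.{v} (Fam A) where
  Hom X Y := Σ φ : X.ι → Y.ι, ∀ i, X.obj i ⟶ Y.obj (φ i)
  id X := ⟨fun i => i, fun _ => 𝟙 _⟩
  comp f g := ⟨fun i => g.1 (f.1 i), fun i => f.2 i ≫ g.2 (f.1 i)⟩
  id_comp f := Sigma.ext rfl (heq_of_eq (funext fun i => Category.id_comp _))
  comp_id f := Sigma.ext rfl (heq_of_eq (funext fun i => Category.comp_id _))
  assoc f g h := Sigma.ext rfl (heq_of_eq (funext fun i => Category.assoc _ _ _))

/-- The functor `Fam_Σ L` induced on free coproduct completions, applying `L` componentwise. -/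
def famMap (L : A ⥤ B) : Fam A ⥤ Fam B where
  obj X := ⟨X.ι, fun i => L.obj (X.obj i)⟩
  map f := ⟨f.1, fun i => L.map (f.2 i)⟩
  map_id X := Sigma.ext rfl (heq_of_eq (funext fun i => L.map_id _))
  map_comp f g := Sigma.ext rfl (heq_of_eq (funext fun i => L.map_comp _ _))

/-- `L` is a left multiadjoint (Diers): every `Z` admits a universal family of morphisms
`h i : L (X i) ⟶ Z` through which every `k : L W ⟶ Z` factors as `k = h i ∘ L f` for a unique
pair `(i, f)`. -/
def IsLeftMultiadjoint {C : Type*} {D : Type*} [Category.{v} C] [Category.{v} D]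
    (L : C ⥤ D) : Prop :=
  ∀ Z : D, ∃ (I : Type v) (Xs : I → C) (h : ∀ i, L.obj (Xs i) ⟶ Z),
    ∀ (W : C) (k : L.obj W ⟶ Z), ∃! p : Σ i : I, W ⟶ Xs i, L.map p.2 ≫ h p.1 = k

/-- The free product completion `Fam_Π A = (Fam_Σ (Aᵒᵖ))ᵒᵖ` of the functor `L`. -/
def famPiMap (L : A ⥤ B) : (Fam Aᵒᵖ)ᵒᵖ ⥤ (Fam Bᵒᵖ)ᵒᵖ := (famMap L.op).op

/-- Stability of left multiadjoints under the free product completion (a consequence of the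
pseudo-distributive law of `Fam_Π` over `Fam_Σ`): if `L : A ⥤ B` is a left multiadjoint, then
so is `Fam_Π L : Fam_Π A ⥤ Fam_Π B`. -/
theorem famPiMap_leftMultiadjoint (L : A ⥤ B) (h : IsLeftMultiadjoint L) :
    IsLeftMultiadjoint (famPiMap L) := by
  choose I Xs hh hu using h
  choose p peq pun using hu
  intro Z
  induction Z using Opposite.rec with
  | op Z =>
    obtain ⟨J, Zo⟩ := Z
    refine ⟨∀ j, I ((Zo j).unop),
      fun s => Opposite.op ⟨J, fun j => Opposite.op (Xs _ (s j))⟩,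
      fun s => Quiver.Hom.op ⟨fun j => j, fun j => (hh _ (s j)).op⟩,
      fun W k => ?_⟩
    induction W using Opposite.rec with
    | op W =>
      obtain ⟨Wι, Wo⟩ := W
      rcases k with ⟨κ, kc⟩
      refine ⟨⟨fun j => (p ((Zo j).unop) ((Wo (κ j)).unop) ((kc j).unop)).1,
        Quiver.Hom.op ⟨κ, fun j => ((p ((Zo j).unop) ((Wo (κ j)).unop) ((kc j).unop)).2).op⟩⟩,
        ?_, ?_⟩
      · apply Quiver.Hom.unop_inj
        refine Sigma.ext rfl (heq_of_eq (funext fun j => ?_))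
        exact congrArg Quiver.Hom.op (peq ((Zo j).unop) ((Wo (κ j)).unop) ((kc j).unop))
      · rintro ⟨s', m'⟩ qe
        rcases m' with ⟨ψ, mc⟩
        have qe' := congrArg Quiver.Hom.unop qe
        injection qe' with e1 e2
        subst e1
        have e2' := eq_of_heq e2
        have pu : ∀ j, (⟨s' j, (mc j).unop⟩ : Σ i, ((Wo (ψ j)).unop ⟶ Xs ((Zo j).unop) i))
            = p ((Zo j).unop) ((Wo (ψ j)).unop) ((kc j).unop) := fun j =>
          pun ((Zo j).unop) ((Wo (ψ j)).unop) ((kc j).unop) ⟨s' j, (mc j).unop⟩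
            (congrArg Quiver.Hom.unop (congrFun e2' j))
        exact congrArg
          (fun q : ∀ j, Σ i : I ((Zo j).unop), ((Wo (ψ j)).unop ⟶ Xs ((Zo j).unop) i) =>
            (⟨fun j => (q j).1, Quiver.Hom.op ⟨ψ, fun j => ((q j).2).op⟩⟩ :
              Σ s : ∀ j, I ((Zo j).unop),
                (Opposite.op ⟨Wι, Wo⟩ : (Fam Aᵒᵖ)ᵒᵖ) ⟶
                  Opposite.op ⟨J, fun j => Opposite.op (Xs ((Zo j).unop) (s j))⟩))
          (funext pu)
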